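/- arXiv:math/0211346 — 2 statements merged into one kernel-verified Lean document; each statement's English description precedes it below -/
import Mathlib

section
/- Every 2-region contains a minimal 2-region, i.e., a 2-region H of G such that the only 2-region of H is H itself. -/
/-- A finite multigraph embedded in the plane, presented combinatorially.
Vertices and edges are indexed by natural numbers.  `ends e` is the unordered
pair of endpoints of the edge `e`; `opp v e` is the edge opposite to `e` at a
degree-four vertex `v` (coming from the planar embedding); `nxt v e` is the
next edge after `e` in the clockwise rotation at `v` (the rotation system of
the embedding); `pos v` records the sign of the crossing `v` when the graph
underlies an oriented alternating knot diagram. -/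
structure PG where
  V : Finset ℕ
  E : Finset ℕ
  ends : ℕ → Sym2 ℕ
  opp : ℕ → ℕ → ℕ
  nxt : ℕ → ℕ → ℕ
  pos : ℕ → Bool
  ends_mem : ∀ e ∈ E, ∀ v ∈ ends e, v ∈ V
  opp_mem : ∀ v ∈ V, ∀ e ∈ E, v ∈ ends e → opp v e ∈ E ∧ v ∈ ends (opp v e)
  opp_invol : ∀ v ∈ V, ∀ e ∈ E, v ∈ ends e → opp v (opp v e) = e

namespace PG

/-- The degree of a vertex (the number of incident edges). -/
def deg (G : PG) (v : ℕ) : ℕ := (G.E.filter (fun e => v ∈ G.ends e)).card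

/-- The degree of a vertex inside the subgraph with edge set `Es`. -/
def degIn (G : PG) (Es : Finset ℕ) (v : ℕ) : ℕ :=
  (Es.filter (fun e => v ∈ G.ends e)).card

/-- Adjacency through an edge of the edge set `Es`. -/
def adjIn (G : PG) (Es : Finset ℕ) (u v : ℕ) : Prop :=
  ∃ e ∈ Es, G.ends e = s(u, v)

/-- The subgraph with vertex set `Vs` and edge set `Es` is connected. -/
def connOn (G : PG) (Vs Es : Finset ℕ) : Prop :=
  ∀ u ∈ Vs, ∀ v ∈ Vs, Relation.ReflTransGen (G.adjIn Es) u v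

/-- Data exhibiting a subgraph of the plane graph `G` (with vertex set `Vs`
and edge set `Es`) as a 2-region or a minimal loop: a boundary cycle with
vertex set `bV` and edge set `bE`, a set `base` of base vertices lying on the
boundary cycle and having degree 2, all other boundary vertices having
degree 3, and a set `int` of interior vertices, each of degree 4. -/
structure RegionOn (G : PG) where
  Vs : Finset ℕ
  Es : Finset ℕ
  bV : Finset ℕ
  bE : Finset ℕ
  base : Finset ℕ
  int : Finset ℕ
  VsubV : Vs ⊆ G.V
  EsubE : Es ⊆ G.E
  endsIn : ∀ e ∈ Es, ∀ v ∈ G.ends e, v ∈ Vs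
  bV_sub : bV ⊆ Vs
  bE_sub : bE ⊆ Es
  base_sub : base ⊆ bV
  int_disj : Disjoint bV int
  part : Vs = bV ∪ int
  cycle_ends : ∀ e ∈ bE, ∀ v ∈ G.ends e, v ∈ bV
  cycle_deg : ∀ v ∈ bV, G.degIn bE v = 2
  cycle_conn : G.connOn bV bE
  deg_base : ∀ v ∈ base, G.degIn Es v = 2
  deg_bd : ∀ v ∈ bV \ base, G.degIn Es v = 3
  deg_int : ∀ v ∈ int, G.degIn Es v = 4
  conn : G.connOn Vs Es

/-- `R` is (the region data of) a 2-region: exactly two base vertices. -/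
def IsTwoRegion {G : PG} (R : RegionOn G) : Prop := R.base.card = 2

/-- `R` is (the region data of) a minimal loop: exactly one base vertex. -/
def IsMinLoop {G : PG} (R : RegionOn G) : Prop := R.base.card = 1

/-- `R` spans the whole plane graph `G`. -/
def Spans {G : PG} (R : RegionOn G) : Prop := R.Vs = G.V ∧ R.Es = G.E

/-- `R` is a 2-region (or minimal loop) *of* the region `S`: it is contained
in `S` and every edge of `S` meeting the interior of `R` belongs to `R`. -/
def RegionOf {G : PG} (R S : RegionOn G) : Prop :=
  R.Vs ⊆ S.Vs ∧ R.Es ⊆ S.Es ∧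
  ∀ e ∈ S.Es, (∃ v ∈ R.int, v ∈ G.ends e) → e ∈ R.Es

/-- Every edge of `G` meeting the interior of `R` belongs to `R`
(i.e. `R` is a region of the whole plane graph `G`). -/
def RegionOfWhole {G : PG} (R : RegionOn G) : Prop :=
  ∀ e ∈ G.E, (∃ v ∈ R.int, v ∈ G.ends e) → e ∈ R.Es

/-- An arc in the 2-region or minimal loop `R`: a maximal path which starts
at a non-base boundary vertex along the unique non-boundary edge there, all
of whose internal vertices are interior vertices of `R`, and which at each
internal (degree-four) vertex continues along the opposite edge. -/
structure Arc (G : PG) (R : RegionOn G) where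
  vs : List ℕ
  es : List ℕ
  len : vs.length = es.length + 1
  ne : es ≠ []
  mem_vs : ∀ v ∈ vs, v ∈ R.Vs
  mem_es : ∀ e ∈ es, e ∈ R.Es
  chain : ∀ i, i < es.length → G.ends es[i]! = s(vs[i]!, vs[i + 1]!)
  start_bd : vs.head! ∈ R.bV \ R.base
  start_nb : es.head! ∉ R.bE
  start_uniq : ∀ e ∈ R.Es, e ∉ R.bE → vs.head! ∈ G.ends e → e = es.head!
  internal_int : ∀ i, 0 < i → i + 1 < vs.length → vs[i]! ∈ R.int
  internal_opp : ∀ i, i + 1 < es.length → es[i + 1]! = G.opp vs[i + 1]! es[i]!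
  maximal : vs.getLast! ∈ R.int → G.opp vs.getLast! es.getLast! ∈ es

/-- A boundary path of a 2-region: a path along the boundary cycle joining
the two base vertices. -/
def IsBoundaryPath (G : PG) (R : RegionOn G) (P : List ℕ) : Prop :=
  P.Nodup ∧ (∀ v ∈ P, v ∈ R.bV) ∧ P.head! ∈ R.base ∧ P.getLast! ∈ R.base ∧
  P.head! ≠ P.getLast! ∧
  ∀ i, i + 1 < P.length → ∃ e ∈ R.bE, G.ends e = s(P[i]!, P[i + 1]!)

/-- The triangle with vertices `a b c` and sides `p = ab`, `q = bc`,
`r = ca` bounds a face of `G`. -/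
def TriFace (G : PG) (a b c p q r : ℕ) : Prop :=
  a ∈ G.V ∧ b ∈ G.V ∧ c ∈ G.V ∧ a ≠ b ∧ b ≠ c ∧ a ≠ c ∧
  p ∈ G.E ∧ q ∈ G.E ∧ r ∈ G.E ∧ p ≠ q ∧ q ≠ r ∧ p ≠ r ∧
  G.ends p = s(a, b) ∧ G.ends q = s(b, c) ∧ G.ends r = s(c, a) ∧
  G.nxt b p = q ∧ G.nxt c q = r ∧ G.nxt a r = p

/-- A 2-group (bigon): two vertices joined by two parallel edges bounding an
empty face. -/
def Bigon (G : PG) (u v e f : ℕ) : Prop :=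
  u ∈ G.V ∧ v ∈ G.V ∧ u ≠ v ∧ e ∈ G.E ∧ f ∈ G.E ∧ e ≠ f ∧
  G.ends e = s(u, v) ∧ G.ends f = s(u, v) ∧ G.nxt u e = f ∧ G.nxt v f = e

/-- An ots-triangle: a triangular face none of whose sides lies on a bigon. -/
def OtsTriangle (G : PG) (a b c p q r : ℕ) : Prop :=
  G.TriFace a b c p q r ∧
  ∀ u v e f, G.Bigon u v e f →
    e ≠ p ∧ e ≠ q ∧ e ≠ r ∧ f ≠ p ∧ f ≠ q ∧ f ≠ r

/-- A rots-triangle: a triangular face sharing an edge with a bigon face. -/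
def RotsTriangle (G : PG) (a b c p q r : ℕ) : Prop :=
  G.TriFace a b c p q r ∧
  ∃ u v e f, G.Bigon u v e f ∧
    (e = p ∨ e = q ∨ e = r ∨ f = p ∨ f = q ∨ f = r)

/-- The whole graph `G` is a 2-group: two vertices joined by two
parallel edges. -/
def IsTwoGroupGraph (G : PG) : Prop :=
  ∃ u v e f, u ≠ v ∧ e ≠ f ∧ G.V = {u, v} ∧ G.E = {e, f} ∧
    G.ends e = s(u, v) ∧ G.ends f = s(u, v)

/-- `G'` is obtained from `G` by an `ots` operation: a side of an
ots-triangle `a b c` (the side `q`, joining `b` and `c`) is moved across the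
opposite vertex `a`.  There are three cases according to how many sides of
the triangle lie on the boundary of the region; in the interior case the
vertex and edge sets are unchanged and only the incidences of the six edges
attached to the triangle (and the rotations at its vertices) change; when one
(resp. two) sides lie on the boundary, one vertex (resp. two vertices) and
two (resp. three) edges disappear. -/
def OtsStep (G G' : PG) : Prop :=
  ∃ a b c p q r, G.OtsTriangle a b c p q r ∧
  ( -- Case 1: interior triangle
    (∃ e f g h i j we wf wg wh wi wj,
      G.deg a = 4 ∧ G.deg b = 4 ∧ G.deg c = 4 ∧
      e ∈ G.E ∧ f ∈ G.E ∧ g ∈ G.E ∧ h ∈ G.E ∧ i ∈ G.E ∧ j ∈ G.E ∧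
      G.ends e = s(a, we) ∧ G.ends f = s(a, wf) ∧
      G.ends g = s(b, wg) ∧ G.ends h = s(b, wh) ∧
      G.ends i = s(c, wi) ∧ G.ends j = s(c, wj) ∧
      G.nxt a p = e ∧ G.nxt a e = f ∧ G.nxt a f = r ∧
      G.nxt b q = g ∧ G.nxt b g = h ∧ G.nxt b h = p ∧
      G.nxt c r = i ∧ G.nxt c i = j ∧ G.nxt c j = q ∧
      G'.V = G.V ∧ G'.E = G.E ∧
      G'.ends e = s(b, we) ∧ G'.ends h = s(a, wh) ∧
      G'.ends g = s(c, wg) ∧ G'.ends j = s(b, wj) ∧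
      G'.ends f = s(c, wf) ∧ G'.ends i = s(a, wi) ∧
      (∀ x, x ≠ e → x ≠ f → x ≠ g → x ≠ h → x ≠ i → x ≠ j →
        G'.ends x = G.ends x) ∧
      (∀ v, v ≠ a → v ≠ b → v ≠ c → G'.nxt v = G.nxt v) ∧
      G'.nxt a p = h ∧ G'.nxt a h = i ∧ G'.nxt a i = r ∧ G'.nxt a r = p ∧
      G'.nxt b p = q ∧ G'.nxt b q = e ∧ G'.nxt b e = j ∧ G'.nxt b j = p ∧
      G'.nxt c q = f ∧ G'.nxt c f = g ∧ G'.nxt c g = r ∧ G'.nxt c r = q)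
    ∨
    -- Case 2: exactly the side `q` lies on the boundary
    (∃ e f g i we wf wg wi,
      G.deg a = 4 ∧ G.deg b = 3 ∧ G.deg c = 3 ∧
      e ∈ G.E ∧ f ∈ G.E ∧ g ∈ G.E ∧ i ∈ G.E ∧
      G.ends e = s(a, we) ∧ G.ends f = s(a, wf) ∧
      G.ends g = s(b, wg) ∧ G.ends i = s(c, wi) ∧
      G'.V = G.V \ {a} ∧ G'.E = G.E \ {p, r} ∧
      G'.ends e = s(b, we) ∧ G'.ends f = s(c, wf) ∧
      G'.ends g = s(c, wg) ∧ G'.ends i = s(b, wi) ∧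
      (∀ x, x ≠ e → x ≠ f → x ≠ g → x ≠ i → G'.ends x = G.ends x) ∧
      (∀ v, v ≠ a → v ≠ b → v ≠ c → G'.nxt v = G.nxt v))
    ∨
    -- Case 3: the sides `p` and `r` lie on the boundary and meet at the
    -- base vertex `a`
    (∃ h i wh wi,
      G.deg a = 2 ∧ G.deg b = 3 ∧ G.deg c = 3 ∧
      h ∈ G.E ∧ i ∈ G.E ∧
      G.ends h = s(b, wh) ∧ G.ends i = s(c, wi) ∧
      G'.V = G.V \ {b, c} ∧ G'.E = G.E \ {p, q, r} ∧
      G'.ends h = s(a, wh) ∧ G'.ends i = s(a, wi) ∧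
      (∀ x, x ≠ h → x ≠ i → G'.ends x = G.ends x) ∧
      (∀ v, v ≠ a → v ≠ b → v ≠ c → G'.nxt v = G.nxt v)))

/-- `G'` is obtained from `G` by turning a 2-group both of whose vertices are
interior (degree-four) vertices: two of the four outside edges are detached
and reattached at the opposite ends of the 2-group. -/
def TStep (G G' : PG) : Prop :=
  ∃ u v e f e1 e2 f1 f2 w1 w2 z1 z2,
    G.Bigon u v e f ∧ G.deg u = 4 ∧ G.deg v = 4 ∧
    e1 ∈ G.E ∧ e2 ∈ G.E ∧ f1 ∈ G.E ∧ f2 ∈ G.E ∧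
    G.ends e1 = s(u, w1) ∧ G.ends e2 = s(u, w2) ∧
    G.ends f1 = s(v, z1) ∧ G.ends f2 = s(v, z2) ∧
    e1 ≠ e ∧ e1 ≠ f ∧ e2 ≠ e ∧ e2 ≠ f ∧ f1 ≠ e ∧ f1 ≠ f ∧
    f2 ≠ e ∧ f2 ≠ f ∧ e1 ≠ e2 ∧ f1 ≠ f2 ∧
    G'.V = G.V ∧ G'.E = G.E ∧
    G'.ends e2 = s(v, w2) ∧ G'.ends f2 = s(u, z2) ∧
    (∀ x, x ≠ e2 → x ≠ f2 → G'.ends x = G.ends x)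

/-- `G` is a knot configuration: a connected 4-regular plane graph. -/
def IsKnotConfig (G : PG) : Prop :=
  (∀ v ∈ G.V, G.deg v = 4) ∧ G.connOn G.V G.E

/-- A prime configuration: there is no 2-tangle, i.e. no pair of edges whose
removal disconnects the diagram into two parts each containing a crossing. -/
def IsPrime (G : PG) : Prop :=
  ¬ ∃ e1 e2, e1 ∈ G.E ∧ e2 ∈ G.E ∧ e1 ≠ e2 ∧
    ∃ A B : Finset ℕ, A.Nonempty ∧ B.Nonempty ∧ Disjoint A B ∧
      A ∪ B = G.V ∧
      (∀ e ∈ G.E, e ≠ e1 → e ≠ e2 →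
        (∀ v ∈ G.ends e, v ∈ A) ∨ (∀ v ∈ G.ends e, v ∈ B)) ∧
      (∃ x ∈ A, x ∈ G.ends e1) ∧ (∃ y ∈ B, y ∈ G.ends e1) ∧
      (∃ x ∈ A, x ∈ G.ends e2) ∧ (∃ y ∈ B, y ∈ G.ends e2)

/-- A knot circuit based at the crossing `v`: a closed walk starting and
ending at `v`, not meeting `v` in between, which at every intermediate
crossing continues along the opposite edge. -/
structure KnotCircuit (G : PG) (v : ℕ) where
  vs : List ℕ
  es : List ℕ
  len : vs.length = es.length + 1
  ne : es ≠ []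
  head : vs.head! = v
  last : vs.getLast! = v
  no_rep : ∀ i, 0 < i → i + 1 < vs.length → vs[i]! ≠ v
  mem_es : ∀ e ∈ es, e ∈ G.E
  chain : ∀ i, i < es.length → G.ends es[i]! = s(vs[i]!, vs[i + 1]!)
  follow : ∀ i, i + 1 < es.length → es[i + 1]! = G.opp vs[i + 1]! es[i]!

end PG

/-- Every 2-region contains a minimal 2-region, i.e. a 2-region
`H` such that the only 2-region of `H` is `H` itself. -/
theorem stmt_7 (G : PG) (S : PG.RegionOn G) (hS : PG.Spans S)
    (h2 : PG.IsTwoRegion S) :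
    ∃ H : PG.RegionOn G, PG.IsTwoRegion H ∧ PG.RegionOf H S ∧
      ∀ H' : PG.RegionOn G, PG.IsTwoRegion H' → PG.RegionOf H' H →
        H'.Vs = H.Vs ∧ H'.Es = H.Es := by
  classical
  -- `P R` : `R` is a 2-region of `S`.
  set P : PG.RegionOn G → Prop :=
    fun R => PG.IsTwoRegion R ∧ PG.RegionOf R S with hP
  have hPS : P S := ⟨h2, subset_rfl, subset_rfl, fun e he _ => he⟩
  have hex : ∃ n, ∃ R : PG.RegionOn G, P R ∧ R.Es.card = n := ⟨_, S, hPS, rfl⟩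
  obtain ⟨H, hH, hcard⟩ := Nat.find_spec hex
  refine ⟨H, hH.1, hH.2, ?_⟩
  intro H' h2' hsub
  -- boundary vertices of `H` have degree at most 3
  have hbd : ∀ v ∈ H.bV, G.degIn H.Es v ≤ 3 := by
    intro v hv
    by_cases hb : v ∈ H.base
    · have := H.deg_base v hb; omega
    · have := H.deg_bd v (Finset.mem_sdiff.mpr ⟨hv, hb⟩); omega
  -- interior vertices of `H'` are interior vertices of `H`
  have hint : ∀ v ∈ H'.int, v ∈ H.int := by
    intro v hv
    have hd4 : G.degIn H'.Es v = 4 := H'.deg_int v hv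
    have hle : G.degIn H'.Es v ≤ G.degIn H.Es v :=
      Finset.card_le_card (Finset.filter_subset_filter _ hsub.2.1)
    have hvV : v ∈ H.Vs :=
      hsub.1 (H'.part ▸ Finset.mem_union_right _ hv)
    rw [H.part] at hvV
    rcases Finset.mem_union.mp hvV with hb | hi
    · exact absurd (hbd v hb) (by omega)
    · exact hi
  -- `H'` is a 2-region of `S`
  have hH'S : P H' := by
    refine ⟨h2', hsub.1.trans hH.2.1, hsub.2.1.trans hH.2.2.1, ?_⟩
    rintro e heS ⟨v, hv, hve⟩
    exact hsub.2.2 e (hH.2.2.2 e heS ⟨v, hint v hv, hve⟩) ⟨v, hv, hve⟩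
  -- minimality of the number of edges
  have hmin : Nat.find hex ≤ H'.Es.card := Nat.find_min' hex ⟨H', hH'S, rfl⟩
  have hEs : H'.Es = H.Es :=
    Finset.eq_of_subset_of_card_le hsub.2.1 (by omega)
  refine ⟨?_, hEs⟩
  -- vertex sets are equal
  apply Finset.Subset.antisymm hsub.1
  intro v hv
  -- every vertex of `H` has positive degree in `H.Es`
  have hpos : 0 < G.degIn H.Es v := by
    rw [H.part] at hv
    rcases Finset.mem_union.mp hv with hb | hi
    · by_cases hbase : v ∈ H.base
      · have := H.deg_base v hbase; omega
      · have := H.deg_bd v (Finset.mem_sdiff.mpr ⟨hb, hbase⟩); omega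
    · have := H.deg_int v hi; omega
  obtain ⟨e, he⟩ := Finset.card_pos.mp hpos
  have he' := Finset.mem_filter.mp he
  exact H'.endsIn e (hEs ▸ he'.1) v he'.2
end

section
/- Let l be a line in the plane and let L be a finite set of at least two other lines, each intersecting l, with no three lines of L ∪ {l} concurrent. If some two lines of L intersect at a point X not on l, then there exists a triangle with one side contained in l, whose other two sides lie on lines of L, whose third vertex lies on the same side of l as X, and whose open interior meets no line of L. -/
/-- An affine line `{p | a x + b y = c}` in the plane. -/
structure Line where
  a : ℝ
  b : ℝ
  c : ℝ
  nd : (a, b) ≠ (0, 0)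

/-- The set of points of the line. -/
def Line.carrier (l : Line) : Set (ℝ × ℝ) := {p | l.a * p.1 + l.b * p.2 = l.c}

/-- The signed side function of the line. -/
def Line.side (l : Line) (p : ℝ × ℝ) : ℝ := l.a * p.1 + l.b * p.2 - l.c

/-- `p` and `q` lie strictly on the same side of `l`. -/
def SameSide (l : Line) (p q : ℝ × ℝ) : Prop := 0 < l.side p * l.side q

attribute [local instance] Classical.propDecidable

/-!
Among the finitely many points where two lines of `L` meet on the side of `X`, pick one, `A`,
closest to `l` (two distinct lines of `L` meet at most once: lines sharing two points share
their point on `l`, making three lines concurrent). Let `m, n` be its lines and `P, Q` their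
points on `l`. A line `k` of `L` through the interior of `PQA` avoids `A`, so the affine function
`k.side`, which vanishes at an interior point, takes opposite signs at `A` and at `P` or `Q`.
Then `k` crosses `PA` or `QA` strictly between its endpoints, at the apex of a triangle based
on `l` that is strictly lower than `PQA`.
-/

open Topology

theorem exists_eq_add_of_mem_convexHull_triple {𝕜 E : Type*} [Field 𝕜] [LinearOrder 𝕜]
    [IsStrictOrderedRing 𝕜] [AddCommGroup E] [Module 𝕜 E] {P Q A z : E}
    (hz : z ∈ convexHull 𝕜 ({P, Q, A} : Set E)) :
    ∃ α β γ : 𝕜, 0 ≤ α ∧ 0 ≤ β ∧ 0 ≤ γ ∧ α + β + γ = 1 ∧ z = α • P + β • Q + γ • A := by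
  rw [← convexJoin_singleton_segment, mem_convexJoin] at hz
  obtain ⟨_, rfl, y, ⟨c, d, hc, hd, hcd, rfl⟩, a, b, ha, hb, hab, rfl⟩ := hz
  refine ⟨a, b * c, b * d, ha, by positivity, by positivity,
    by linear_combination b * hcd + hab, ?_⟩
  simp only [smul_add, smul_smul, add_assoc]

theorem mul_neg_or_mul_neg_of_add_add_eq_zero {α β γ u v w : ℝ} (hα : 0 ≤ α) (hβ : 0 ≤ β)
    (hγ : 0 < γ) (hw : w ≠ 0) (h : α * u + β * v + γ * w = 0) : u * w < 0 ∨ v * w < 0 := by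
  by_contra! huv
  have hw' : α * (u * w) + β * (v * w) + γ * (w * w) = 0 := by linear_combination w * h
  linarith [mul_nonneg hα huv.1, mul_nonneg hβ huv.2, mul_pos hγ (mul_self_pos.2 hw)]

namespace Line

theorem mem_carrier_iff {l : Line} {p : ℝ × ℝ} : p ∈ l.carrier ↔ l.side p = 0 := by
  simp [Line.carrier, Line.side, sub_eq_zero]

theorem a_ne_zero_or_b_ne_zero (l : Line) : l.a ≠ 0 ∨ l.b ≠ 0 := by
  by_contra! h
  exact l.nd (by rw [h.1, h.2])

theorem sq_add_sq_pos (l : Line) : 0 < l.a ^ 2 + l.b ^ 2 := by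
  rcases l.a_ne_zero_or_b_ne_zero with h | h <;> positivity

theorem side_add_add (k : Line) {α β γ : ℝ} (h : α + β + γ = 1) (P Q A : ℝ × ℝ) :
    k.side (α • P + β • Q + γ • A) = α * k.side P + β * k.side Q + γ * k.side A := by
  simp only [Line.side, Prod.fst_add, Prod.snd_add, Prod.smul_fst, Prod.smul_snd, smul_eq_mul]
  linear_combination k.c * h

theorem side_sub_smul_add_smul (k : Line) (P A : ℝ × ℝ) (t : ℝ) :
    k.side ((1 - t) • P + t • A) = (1 - t) * k.side P + t * k.side A := by
  simp only [Line.side, Prod.fst_add, Prod.snd_add, Prod.smul_fst, Prod.smul_snd, smul_eq_mul]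
  ring

theorem side_sub_smul (k : Line) (z : ℝ × ℝ) (t : ℝ) :
    k.side (z - t • (k.a, k.b)) = k.side z - t * (k.a ^ 2 + k.b ^ 2) := by
  simp only [Line.side, Prod.fst_sub, Prod.snd_sub, Prod.smul_fst, Prod.smul_snd, smul_eq_mul]
  ring

theorem mem_of_mem_of_mem {m n : Line} {p q r : ℝ × ℝ} (hpq : p ≠ q)
    (hpm : p ∈ m.carrier) (hqm : q ∈ m.carrier) (hpn : p ∈ n.carrier) (hqn : q ∈ n.carrier)
    (hrn : r ∈ n.carrier) : r ∈ m.carrier := by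
  simp only [mem_carrier_iff, Line.side] at *
  -- `r - p` and `p - q` are parallel: both are orthogonal to the normal `(n.a, n.b)`
  have hdet : (p.1 - q.1) * (r.2 - p.2) - (p.2 - q.2) * (r.1 - p.1) = 0 := by
    rcases n.a_ne_zero_or_b_ne_zero with h | h <;> refine (mul_eq_zero.1 ?_).resolve_left h
    · linear_combination (r.2 - p.2) * (hpn - hqn) - (p.2 - q.2) * (hrn - hpn)
    · linear_combination (r.1 - p.1) * (hqn - hpn) + (p.1 - q.1) * (hrn - hpn)
  have hpq' : p.1 - q.1 ≠ 0 ∨ p.2 - q.2 ≠ 0 := by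
    by_contra! h
    exact hpq (Prod.ext (sub_eq_zero.1 h.1) (sub_eq_zero.1 h.2))
  rcases hpq' with h | h <;> refine (mul_eq_zero.1 ?_).resolve_left h
  · linear_combination (r.1 - p.1) * (hpm - hqm) + (p.1 - q.1) * hpm + m.b * hdet
  · linear_combination (r.2 - p.2) * (hpm - hqm) + (p.2 - q.2) * hpm - m.a * hdet

theorem side_mul_pos_of_mem_interior {k : Line} {s : ℝ} (hs : s ≠ 0) {C : Set (ℝ × ℝ)}
    (hC : ∀ y ∈ C, 0 ≤ k.side y * s) {z : ℝ × ℝ} (hz : z ∈ interior C) :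
    0 < k.side z * s := by
  refine (hC z (interior_subset hz)).lt_of_ne fun h => ?_
  have hz0 : k.side z = 0 := (mul_eq_zero.1 h.symm).resolve_right hs
  -- moving `z` slightly along the normal `-s • (k.a, k.b)` stays in `C` but makes `k.side * s < 0`
  have hpath : Continuous fun t : ℝ => z - (t * s) • (k.a, k.b) := by fun_prop
  have hnhds : ∀ᶠ t in 𝓝[>] (0 : ℝ), z - (t * s) • (k.a, k.b) ∈ C := by
    refine nhdsWithin_le_nhds (hpath.continuousAt.preimage_mem_nhds ?_)
    simpa using mem_interior_iff_mem_nhds.1 hz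
  obtain ⟨t, htC, ht⟩ := (hnhds.and self_mem_nhdsWithin).exists
  have := hC _ htC
  rw [side_sub_smul, hz0] at this
  nlinarith [mul_pos (mul_pos ht (sq_pos_of_ne_zero hs)) k.sq_add_sq_pos]

theorem side_mul_nonneg_of_mem_convexHull {k : Line} {P Q A : ℝ × ℝ} (hP : P ∈ k.carrier)
    (hQ : Q ∈ k.carrier) {y : ℝ × ℝ} (hy : y ∈ convexHull ℝ ({P, Q, A} : Set (ℝ × ℝ))) :
    0 ≤ k.side y * k.side A := by
  obtain ⟨α, β, γ, -, -, hγ, hαβγ, rfl⟩ := exists_eq_add_of_mem_convexHull_triple hy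
  rw [side_add_add k hαβγ, mem_carrier_iff.1 hP, mem_carrier_iff.1 hQ]
  nlinarith [mul_nonneg hγ (mul_self_nonneg (k.side A))]

theorem not_mem_of_mem_interior_convexHull {k : Line} {P Q A z : ℝ × ℝ} (hP : P ∈ k.carrier)
    (hQ : Q ∈ k.carrier) (hA : A ∉ k.carrier)
    (hz : z ∈ interior (convexHull ℝ ({P, Q, A} : Set (ℝ × ℝ)))) : z ∉ k.carrier := by
  have hpos := side_mul_pos_of_mem_interior (mt mem_carrier_iff.2 hA)
    (fun y hy => side_mul_nonneg_of_mem_convexHull hP hQ hy) hz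
  exact fun hzk => by simp [mem_carrier_iff.1 hzk] at hpos

theorem exists_side_eq_zero_of_side_mul_neg {k : Line} {P A : ℝ × ℝ}
    (h : k.side P * k.side A < 0) :
    ∃ t ∈ Set.Ioo (0 : ℝ) 1, k.side ((1 - t) • P + t • A) = 0 := by
  have hd : 0 < k.side P * (k.side P - k.side A) := by nlinarith [sq_nonneg (k.side P)]
  obtain ⟨hP, hd'⟩ := mul_ne_zero_iff.1 hd.ne'
  refine ⟨k.side P ^ 2 / (k.side P * (k.side P - k.side A)),
    ⟨div_pos (by positivity) hd, (div_lt_one hd).2 (by nlinarith)⟩, ?_⟩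
  rw [side_sub_smul_add_smul]
  field_simp
  ring

theorem exists_mem_inter_of_side_mul_neg {l m k : Line} {P A : ℝ × ℝ}
    (hPl : P ∈ l.carrier) (hPm : P ∈ m.carrier) (hAm : A ∈ m.carrier)
    (h : k.side P * k.side A < 0) :
    ∃ Y ∈ k.carrier, Y ∈ m.carrier ∧ ∃ t ∈ Set.Ioo (0 : ℝ) 1, l.side Y = t * l.side A := by
  obtain ⟨t, ht, hYk⟩ := exists_side_eq_zero_of_side_mul_neg h
  refine ⟨_, mem_carrier_iff.2 hYk, ?_, t, ht, ?_⟩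
  · rw [mem_carrier_iff, side_sub_smul_add_smul, mem_carrier_iff.1 hPm, mem_carrier_iff.1 hAm]
    ring
  · rw [side_sub_smul_add_smul, mem_carrier_iff.1 hPl]
    ring

theorem exists_crossing_below_apex {l m n k : Line} {P Q A z : ℝ × ℝ}
    (hPl : P ∈ l.carrier) (hQl : Q ∈ l.carrier) (hAl : A ∉ l.carrier)
    (hPm : P ∈ m.carrier) (hAm : A ∈ m.carrier) (hQn : Q ∈ n.carrier) (hAn : A ∈ n.carrier)
    (hAk : A ∉ k.carrier) (hz : z ∈ interior (convexHull ℝ ({P, Q, A} : Set (ℝ × ℝ))))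
    (hzk : z ∈ k.carrier) :
    ∃ Y ∈ k.carrier, (Y ∈ m.carrier ∨ Y ∈ n.carrier) ∧
      ∃ t ∈ Set.Ioo (0 : ℝ) 1, l.side Y = t * l.side A := by
  obtain ⟨α, β, γ, hα, hβ, hγ, hαβγ, rfl⟩ :=
    exists_eq_add_of_mem_convexHull_triple (interior_subset hz)
  have hzl := not_mem_of_mem_interior_convexHull hPl hQl hAl hz
  rw [mem_carrier_iff, side_add_add l hαβγ, mem_carrier_iff.1 hPl, mem_carrier_iff.1 hQl] at hzl
  rw [mem_carrier_iff, side_add_add k hαβγ] at hzk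
  replace hγ : 0 < γ := hγ.lt_of_ne fun h0 => hzl (by simp [← h0])
  rcases mul_neg_or_mul_neg_of_add_add_eq_zero hα hβ hγ (mt mem_carrier_iff.2 hAk) hzk with h | h
  · obtain ⟨Y, hYk, hYm, hY⟩ := exists_mem_inter_of_side_mul_neg hPl hPm hAm h
    exact ⟨Y, hYk, Or.inl hYm, hY⟩
  · obtain ⟨Y, hYk, hYn, hY⟩ := exists_mem_inter_of_side_mul_neg hQl hQn hAn h
    exact ⟨Y, hYk, Or.inr hYn, hY⟩

end Line

/-- The apexes, on the side of `X`, of the triangles based on `l` formed by two lines of `L`. -/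
def apexes (l : Line) (L : Finset Line) (X : ℝ × ℝ) : Set (ℝ × ℝ) :=
  {A | SameSide l A X ∧ ∃ m ∈ L, ∃ n ∈ L, m ≠ n ∧ A ∈ m.carrier ∧ A ∈ n.carrier}

theorem apexes_finite {l : Line} {L : Finset Line} (X : ℝ × ℝ)
    (hmeet : ∀ m ∈ L, ∃ p, p ∈ l.carrier ∧ p ∈ m.carrier)
    (hoff : ∀ m ∈ L, ∀ n ∈ L, m ≠ n → ∀ p ∈ m.carrier, p ∈ n.carrier → p ∉ l.carrier) :
    (apexes l L X).Finite := by
  have hpair : ∀ mn ∈ L.offDiag, (mn.1.carrier ∩ mn.2.carrier).Finite := by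
    rintro ⟨m, n⟩ hmn
    obtain ⟨hm, hn, hmn⟩ := Finset.mem_offDiag.1 hmn
    refine Set.Subsingleton.finite fun p ⟨hpm, hpn⟩ q ⟨hqm, hqn⟩ => by_contra fun hpq => ?_
    obtain ⟨r, hrl, hrn⟩ := hmeet n hn
    exact hoff m hm n hn hmn r (Line.mem_of_mem_of_mem hpq hpm hqm hpn hqn hrn) hrn hrl
  refine (L.offDiag.finite_toSet.biUnion hpair).subset ?_
  rintro A ⟨-, m, hm, n, hn, hmn, hAm, hAn⟩
  exact Set.mem_biUnion (x := (m, n)) (Finset.mem_offDiag.2 ⟨hm, hn, hmn⟩) ⟨hAm, hAn⟩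

theorem not_mem_of_mem_interior_of_apex_min {l m n : Line} {L : Finset Line}
    {X P Q A : ℝ × ℝ} (hmin : ∀ Y ∈ apexes l L X, l.side A * l.side X ≤ l.side Y * l.side X)
    (hAX : SameSide l A X) (hm : m ∈ L) (hn : n ∈ L)
    (hPl : P ∈ l.carrier) (hQl : Q ∈ l.carrier) (hAl : A ∉ l.carrier)
    (hPm : P ∈ m.carrier) (hAm : A ∈ m.carrier) (hQn : Q ∈ n.carrier) (hAn : A ∈ n.carrier)
    (hQm : Q ∉ m.carrier) (hPn : P ∉ n.carrier)
    (hA : ∀ k ∈ L, k ≠ m → k ≠ n → A ∉ k.carrier) {k : Line} (hk : k ∈ L) {z : ℝ × ℝ}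
    (hz : z ∈ interior (convexHull ℝ ({P, Q, A} : Set (ℝ × ℝ)))) : z ∉ k.carrier := by
  intro hzk
  have hkm : k ≠ m := by
    rintro rfl
    exact Line.not_mem_of_mem_interior_convexHull hPm hAm hQm (by rwa [Set.pair_comm]) hzk
  have hkn : k ≠ n := by
    rintro rfl
    exact Line.not_mem_of_mem_interior_convexHull hQn hAn hPn
      (by rwa [Set.pair_comm A P, Set.insert_comm Q P]) hzk
  obtain ⟨Y, hYk, hYmn, t, ⟨ht0, ht1⟩, hYl⟩ :=
    Line.exists_crossing_below_apex hPl hQl hAl hPm hAm hQn hAn (hA k hk hkm hkn) hz hzk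
  have hY : Y ∈ apexes l L X := by
    refine ⟨by rw [SameSide, hYl, mul_assoc]; exact mul_pos ht0 hAX, ?_⟩
    rcases hYmn with hYm | hYn
    · exact ⟨k, hk, m, hm, hkm, hYk, hYm⟩
    · exact ⟨k, hk, n, hn, hkn, hYk, hYn⟩
  have hle := hmin Y hY
  rw [hYl, mul_assoc] at hle
  exact absurd hle (not_le.2 (mul_lt_of_lt_one_left hAX ht1))

theorem stmt_12_general (l : Line) (L : Finset Line)
    (hl : l ∉ L)
    (hmeet : ∀ m ∈ L, ∃ p, p ∈ l.carrier ∧ p ∈ m.carrier)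
    (hconc : ∀ m₁ ∈ insert l L, ∀ m₂ ∈ insert l L, ∀ m₃ ∈ insert l L,
      m₁ ≠ m₂ → m₂ ≠ m₃ → m₁ ≠ m₃ →
      ¬ ∃ p, p ∈ m₁.carrier ∧ p ∈ m₂.carrier ∧ p ∈ m₃.carrier)
    (m₀ n₀ : Line) (hm₀ : m₀ ∈ L) (hn₀ : n₀ ∈ L) (hmn₀ : m₀ ≠ n₀)
    (X : ℝ × ℝ) (hX₁ : X ∈ m₀.carrier) (hX₂ : X ∈ n₀.carrier)
    (hXl : X ∉ l.carrier) :
    ∃ m ∈ L, ∃ n ∈ L, m ≠ n ∧ ∃ P Q A : ℝ × ℝ,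
      P ∈ l.carrier ∧ P ∈ m.carrier ∧ Q ∈ l.carrier ∧ Q ∈ n.carrier ∧
      A ∈ m.carrier ∧ A ∈ n.carrier ∧ A ∉ l.carrier ∧ SameSide l A X ∧
      ∀ k ∈ L, ∀ z ∈ interior (convexHull ℝ ({P, Q, A} : Set (ℝ × ℝ))),
        z ∉ k.carrier := by
  have hLl : ∀ m ∈ L, m ≠ l := fun m hm h => hl (h ▸ hm)
  have hoff : ∀ m ∈ L, ∀ n ∈ L, m ≠ n → ∀ p ∈ m.carrier, p ∈ n.carrier → p ∉ l.carrier :=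
    fun m hm n hn hmn p hpm hpn hpl => hconc m (Finset.mem_insert_of_mem hm) n
      (Finset.mem_insert_of_mem hn) l (Finset.mem_insert_self l L) hmn (hLl n hn) (hLl m hm)
      ⟨p, hpm, hpn, hpl⟩
  have hX : X ∈ apexes l L X :=
    ⟨mul_self_pos.2 (mt Line.mem_carrier_iff.2 hXl), m₀, hm₀, n₀, hn₀, hmn₀, hX₁, hX₂⟩
  obtain ⟨A, ⟨hAX, m, hm, n, hn, hmn, hAm, hAn⟩, hmin⟩ :=
    Set.exists_min_image _ (fun A => l.side A * l.side X) (apexes_finite X hmeet hoff) ⟨X, hX⟩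
  obtain ⟨P, hPl, hPm⟩ := hmeet m hm
  obtain ⟨Q, hQl, hQn⟩ := hmeet n hn
  have hAl := hoff m hm n hn hmn A hAm hAn
  have hQm : Q ∉ m.carrier := fun hQm => hoff m hm n hn hmn Q hQm hQn hQl
  have hPn : P ∉ n.carrier := fun hPn => hoff m hm n hn hmn P hPm hPn hPl
  have hA : ∀ k ∈ L, k ≠ m → k ≠ n → A ∉ k.carrier := fun k hk hkm hkn hAk =>
    hconc k (Finset.mem_insert_of_mem hk) m (Finset.mem_insert_of_mem hm) n
      (Finset.mem_insert_of_mem hn) hkm hmn hkn ⟨A, hAk, hAm, hAn⟩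
  exact ⟨m, hm, n, hn, hmn, P, Q, A, hPl, hPm, hQl, hQn, hAm, hAn, hAl, hAX, fun k hk z hz =>
    not_mem_of_mem_interior_of_apex_min hmin hAX hm hn hPl hQl hAl hPm hAm hQn hAn hQm hPn hA hk hz⟩

/-- given a line `l`, a finite set `L` of at least two other
lines each meeting `l`, with no three lines of `L ∪ {l}` concurrent, if two
lines of `L` meet at a point `X` off `l`, then there is a triangle with one
side on `l`, its other two sides on lines of `L`, its apex on the same side
of `l` as `X`, whose open interior meets no line of `L`. -/
theorem stmt_12 (l : Line) (L : Finset Line) (hcard : 2 ≤ L.card)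
    (hl : l ∉ L)
    (hmeet : ∀ m ∈ L, ∃ p, p ∈ l.carrier ∧ p ∈ m.carrier)
    (hconc : ∀ m₁ ∈ insert l L, ∀ m₂ ∈ insert l L, ∀ m₃ ∈ insert l L,
      m₁ ≠ m₂ → m₂ ≠ m₃ → m₁ ≠ m₃ →
      ¬ ∃ p, p ∈ m₁.carrier ∧ p ∈ m₂.carrier ∧ p ∈ m₃.carrier)
    (m₀ n₀ : Line) (hm₀ : m₀ ∈ L) (hn₀ : n₀ ∈ L) (hmn₀ : m₀ ≠ n₀)
    (X : ℝ × ℝ) (hX₁ : X ∈ m₀.carrier) (hX₂ : X ∈ n₀.carrier)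
    (hXl : X ∉ l.carrier) :
    ∃ m ∈ L, ∃ n ∈ L, m ≠ n ∧ ∃ P Q A : ℝ × ℝ,
      P ∈ l.carrier ∧ P ∈ m.carrier ∧ Q ∈ l.carrier ∧ Q ∈ n.carrier ∧
      A ∈ m.carrier ∧ A ∈ n.carrier ∧ A ∉ l.carrier ∧ SameSide l A X ∧
      ∀ k ∈ L, ∀ z ∈ interior (convexHull ℝ ({P, Q, A} : Set (ℝ × ℝ))),
        z ∉ k.carrier :=
  stmt_12_general l L hl hmeet hconc m₀ n₀ hm₀ hn₀ hmn₀ X hX₁ hX₂ hXl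
end
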